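/- For every ω > 0 and every real number r < 1, there exists a constant C_r > 0, depending only on ω and r, such that for all real λ ≥ ω and all nonnegative reals A, B, K satisfying (i) λ B² + A² ≤ K B and (ii) λ² B² ≤ A² + K B, one has λ^{2r} B + λ^{r} A ≤ C_r K. -/

import Mathlib

/-!
Since λ > 0, (i) gives A² ≤ K B, which turns (ii) into λ² B² ≤ 2 K B, i.e. λ² B ≤ 2 K; then
(λ A)² ≤ λ² K B ≤ 2 K², so λ A ≤ 2 K. For r ≤ 1 the surplus factors λ^{2r-2} and λ^{r-1} are
at most ω^{2r-2} and ω^{r-1} because λ ≥ ω.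
-/

section EnergyBounds

variable {lam A B K : ℝ}

theorem sq_mul_le_two_mul_of_energy (hlam : 0 < lam) (hB : 0 ≤ B) (hK : 0 ≤ K)
    (hcoer : lam * B ^ 2 + A ^ 2 ≤ K * B) (hmod : lam ^ 2 * B ^ 2 ≤ A ^ 2 + K * B) :
    lam ^ 2 * B ≤ 2 * K := by
  have hA : A ^ 2 ≤ K * B := by nlinarith [mul_nonneg hlam.le (sq_nonneg B)]
  rcases hB.eq_or_lt with rfl | hBpos
  · linarith
  · exact le_of_mul_le_mul_right (by nlinarith) hBpos

theorem mul_le_two_mul_of_energy (hlam : 0 < lam) (hK : 0 ≤ K)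
    (hcoer : lam * B ^ 2 + A ^ 2 ≤ K * B) (hB : lam ^ 2 * B ≤ 2 * K) :
    lam * A ≤ 2 * K := by
  have hA : A ^ 2 ≤ K * B := by nlinarith [mul_nonneg hlam.le (sq_nonneg B)]
  have hsq : (lam * A) ^ 2 ≤ (2 * K) ^ 2 :=
    calc (lam * A) ^ 2 = lam ^ 2 * A ^ 2 := by ring
      _ ≤ lam ^ 2 * (K * B) := by gcongr
      _ = K * (lam ^ 2 * B) := by ring
      _ ≤ K * (2 * K) := by gcongr
      _ ≤ (2 * K) ^ 2 := by nlinarith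
  exact (le_abs_self _).trans (abs_le_of_sq_le_sq hsq (by positivity))

end EnergyBounds

theorem Real.rpow_mul_le_of_rpow_mul_le {ω lam p q x M : ℝ} (hω : 0 < ω) (hlam : ω ≤ lam)
    (hpq : p ≤ q) (hx : 0 ≤ x) (h : lam ^ q * x ≤ M) :
    lam ^ p * x ≤ ω ^ (p - q) * M := by
  have hlam0 : 0 < lam := hω.trans_le hlam
  calc lam ^ p * x = lam ^ (p - q) * (lam ^ q * x) := by
        rw [← mul_assoc, ← Real.rpow_add hlam0, sub_add_cancel]
    _ ≤ ω ^ (p - q) * M :=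
        mul_le_mul (Real.rpow_le_rpow_of_nonpos hω hlam (by linarith)) h
          (by positivity) (by positivity)

/-- Iteration lemma for the complex-λ Dirichlet interior estimate with
`F ∈ L²`: for every `r < 1`, the two inequalities imply
`λ^{2r} B + λ^{r} A ≤ C_r K`. -/
theorem dirichlet_L2_iteration_lemma (ω r : ℝ) (hω : 0 < ω) (hr : r < 1) :
    ∃ C > (0 : ℝ), ∀ lam A B K : ℝ, ω ≤ lam → 0 ≤ A → 0 ≤ B → 0 ≤ K →
      lam * B ^ 2 + A ^ 2 ≤ K * B →
      lam ^ 2 * B ^ 2 ≤ A ^ 2 + K * B →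
      lam ^ (2 * r) * B + lam ^ r * A ≤ C * K := by
  refine ⟨2 * ω ^ (2 * r - 2) + 2 * ω ^ (r - 1), by positivity, ?_⟩
  intro lam A B K hlam hA hB hK hcoer hmod
  have hlam0 : 0 < lam := hω.trans_le hlam
  have hBK := sq_mul_le_two_mul_of_energy hlam0 hB hK hcoer hmod
  have hAK := mul_le_two_mul_of_energy hlam0 hK hcoer hBK
  have hB' : lam ^ (2 * r) * B ≤ ω ^ (2 * r - 2) * (2 * K) :=
    Real.rpow_mul_le_of_rpow_mul_le hω hlam (by linarith) hB
      (by rwa [Real.rpow_two])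
  have hA' : lam ^ r * A ≤ ω ^ (r - 1) * (2 * K) :=
    Real.rpow_mul_le_of_rpow_mul_le hω hlam hr.le hA (by rwa [Real.rpow_one])
  linarith
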